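/- Let λ > 0 be a root of the equation −(1/λ) log(1 − λ²/(4(exp(λ) − 1 − λ))) = 1 (such a root exists and satisfies 0.535 ≤ λ ≤ 0.536). Define L(x) = max{−1, min{1, x}}, L₊(x) = (1/λ) log(1 + λx + (exp(λ) − 1 − λ)x²), L₋(x) = −L₊(−x), L₊'(x) = (1/log 2) log(1 + (log 2)x + (log 2)²x²/2 + (1 − log 2 − (log 2)²/2)(max{x,0})³), and L₋'(x) = −L₊'(−x). Then for every real x: L₋(x) ≤ L(x) ≤ L₊(x) and L₋'(x) ≤ L(x) ≤ L₊'(x). -/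

import Mathlib

/-!
Since `exp` is increasing, `L ≤ L₊` amounts to `exp (λ L(x)) ≤ 1 + λx + (e^λ - 1 - λ)x²`, checked
on the three pieces of `L`: on `[-1, 1]` by comparing the exponential series termwise
(`xⁿ ≤ x²` for `n ≥ 2`), for `x ≥ 1` by monotonicity, and for `x ≤ -1` because the root condition
says exactly that `e^(-λ)` is the minimum of the quadratic. `L₊'` is handled alike with
`λ = log 2`, using `eᵗ ≤ 1 + t + t²/2` for `t ≤ 0` and the cubic Taylor tail on `[0, 1]`.
The lower bounds follow since `L` is odd.
-/

/-- The clipping function `L(x) = max {-1, min {1, x}}`. -/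
noncomputable def clipL (x : ℝ) : ℝ := max (-1) (min 1 x)

/-- The upper bound `L₊(x) = (1/λ) log (1 + λ x + (exp λ - 1 - λ) x²)`. -/
noncomputable def clipLplus (lam x : ℝ) : ℝ :=
  (1 / lam) * Real.log (1 + lam * x + (Real.exp lam - 1 - lam) * x ^ 2)

/-- The lower bound `L₋(x) = -L₊(-x)`. -/
noncomputable def clipLminus (lam x : ℝ) : ℝ := -clipLplus lam (-x)

/-- The alternative upper bound
`L₊'(x) = (1/log 2) log (1 + (log 2) x + (log 2)² x²/2 + (1 - log 2 - (log 2)²/2) (x⁺)³)`. -/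
noncomputable def clipLplus' (x : ℝ) : ℝ :=
  (1 / Real.log 2) * Real.log (1 + Real.log 2 * x + (Real.log 2) ^ 2 / 2 * x ^ 2 +
    (1 - Real.log 2 - (Real.log 2) ^ 2 / 2) * (max x 0) ^ 3)

/-- The alternative lower bound `L₋'(x) = -L₊'(-x)`. -/
noncomputable def clipLminus' (x : ℝ) : ℝ := -clipLplus' (-x)


open Real Finset
open scoped Nat

namespace Real

theorem exp_mul_sub_sum_range_le {μ x : ℝ} {k : ℕ} (hμ : 0 ≤ μ) (hx : ∀ n, x ^ (n + k) ≤ x ^ k) :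
    exp (μ * x) - ∑ i ∈ range k, (μ * x) ^ i / i ! ≤
      x ^ k * (exp μ - ∑ i ∈ range k, μ ^ i / i !) := by
  have tail (y : ℝ) :
      HasSum (fun n ↦ y ^ (n + k) / (n + k)!) (exp y - ∑ i ∈ range k, y ^ i / i !) :=
    (hasSum_nat_add_iff' k).2 (exp_eq_exp_ℝ ▸ NormedSpace.expSeries_div_hasSum_exp y)
  refine hasSum_le (fun n ↦ ?_) (tail (μ * x)) ((tail μ).mul_left (x ^ k))
  calc (μ * x) ^ (n + k) / (n + k)! = x ^ (n + k) * (μ ^ (n + k) / (n + k)!) := by ring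
    _ ≤ x ^ k * (μ ^ (n + k) / (n + k)!) := mul_le_mul_of_nonneg_right (hx n) (by positivity)

theorem exp_le_one_add_add_sq_div_two_of_nonpos {t : ℝ} (ht : t ≤ 0) :
    exp t ≤ 1 + t + t ^ 2 / 2 := by
  have hpos : 0 < 1 + -t + (-t) ^ 2 / 2 := by nlinarith
  have hinv : exp t * (1 + -t + (-t) ^ 2 / 2) ≤ 1 :=
    calc exp t * (1 + -t + (-t) ^ 2 / 2) ≤ exp t * exp (-t) := by
          gcongr; exact quadratic_le_exp_of_nonneg (neg_nonneg.2 ht)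
      _ = 1 := by rw [← exp_add, add_neg_cancel, exp_zero]
  -- `(1 + t + t²/2) (1 - t + t²/2) = 1 + t⁴/4`
  nlinarith [pow_nonneg (sq_nonneg t) 2, exp_pos t]

theorem le_one_div_mul_log_of_exp_mul_le {μ a b : ℝ} (hμ : 0 < μ) (h : exp (μ * a) ≤ b) :
    a ≤ 1 / μ * log b := by
  rw [one_div_mul_eq_div, le_div_iff₀' hμ]
  exact (le_log_iff_exp_le ((exp_pos _).trans_le h)).2 h

end Real

theorem clipL_of_le_neg_one {x : ℝ} (hx : x ≤ -1) : clipL x = -1 := by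
  rw [clipL, min_eq_right (by linarith), max_eq_left hx]

theorem clipL_of_mem_Icc {x : ℝ} (h₁ : -1 ≤ x) (h₂ : x ≤ 1) : clipL x = x := by
  rw [clipL, min_eq_right h₂, max_eq_right h₁]

theorem clipL_of_one_le {x : ℝ} (hx : 1 ≤ x) : clipL x = 1 := by
  rw [clipL, min_eq_left hx, max_eq_right (by norm_num)]

theorem clipL_neg (x : ℝ) : clipL (-x) = -clipL x := by
  rcases le_or_gt x (-1) with h | h
  · rw [clipL_of_le_neg_one h, clipL_of_one_le (by linarith), neg_neg]
  rcases le_or_gt x 1 with h' | h'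
  · rw [clipL_of_mem_Icc h.le h', clipL_of_mem_Icc (by linarith) (by linarith)]
  · rw [clipL_of_one_le h'.le, clipL_of_le_neg_one (by linarith)]

theorem exp_neg_eq_of_root {lam : ℝ} (hlam : 0 < lam)
    (hroot : -(1 / lam) * log (1 - lam ^ 2 / (4 * (exp lam - 1 - lam))) = 1) :
    exp (-lam) = 1 - lam ^ 2 / (4 * (exp lam - 1 - lam)) := by
  have hc : lam ^ 2 / 2 ≤ exp lam - 1 - lam := by linarith [quadratic_le_exp_of_nonneg hlam.le]
  have hpos : 0 < 1 - lam ^ 2 / (4 * (exp lam - 1 - lam)) := by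
    rw [sub_pos, div_lt_one (by nlinarith)]
    nlinarith
  have hlog : log (1 - lam ^ 2 / (4 * (exp lam - 1 - lam))) = -lam := by
    calc log (1 - lam ^ 2 / (4 * (exp lam - 1 - lam)))
        = -lam * (-(1 / lam) * log (1 - lam ^ 2 / (4 * (exp lam - 1 - lam)))) := by
          field_simp
      _ = -lam := by rw [hroot, mul_one]
  rw [← hlog, exp_log hpos]

theorem exp_mul_clipL_le {lam : ℝ} (hlam : 0 < lam)
    (hroot : -(1 / lam) * log (1 - lam ^ 2 / (4 * (exp lam - 1 - lam))) = 1) (x : ℝ) :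
    exp (lam * clipL x) ≤ 1 + lam * x + (exp lam - 1 - lam) * x ^ 2 := by
  set c := exp lam - 1 - lam
  have hc : lam ^ 2 / 2 ≤ c := by linarith [quadratic_le_exp_of_nonneg hlam.le]
  have hc0 : 0 < c := lt_of_lt_of_le (by positivity) hc
  rcases le_or_gt x (-1) with h | h
  · rw [clipL_of_le_neg_one h, mul_neg_one, exp_neg_eq_of_root hlam hroot]
    have hsq : 0 ≤ (2 * c * x + lam) ^ 2 / (4 * c) := by positivity
    calc 1 - lam ^ 2 / (4 * c) = 1 + lam * x + c * x ^ 2 - (2 * c * x + lam) ^ 2 / (4 * c) := by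
          field_simp; ring
      _ ≤ 1 + lam * x + c * x ^ 2 := by linarith
  rcases le_or_gt x 1 with h' | h'
  · rw [clipL_of_mem_Icc h.le h']
    have hpow (n : ℕ) : x ^ (n + 2) ≤ x ^ 2 :=
      calc x ^ (n + 2) ≤ |x| ^ (n + 2) := (le_abs_self _).trans (abs_pow x _).le
        _ ≤ |x| ^ 2 := pow_le_pow_of_le_one (abs_nonneg x) (abs_le.2 ⟨h.le, h'⟩) (by omega)
        _ = x ^ 2 := sq_abs x
    have htaylor : exp (lam * x) - (1 + lam * x) ≤ x ^ 2 * (exp lam - (1 + lam)) := by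
      simpa [sum_range_succ] using exp_mul_sub_sum_range_le hlam.le hpow
    linarith
  · rw [clipL_of_one_le h'.le, mul_one]
    nlinarith [mul_le_mul_of_nonneg_left (one_le_pow₀ h'.le : 1 ≤ x ^ 2) hc0.le]

theorem exp_log_two_mul_clipL_le (x : ℝ) :
    exp (log 2 * clipL x) ≤ 1 + log 2 * x + log 2 ^ 2 / 2 * x ^ 2 +
      (1 - log 2 - log 2 ^ 2 / 2) * max x 0 ^ 3 := by
  set μ := log 2
  have hμ : 0 < μ := log_pos one_lt_two
  have hexp : exp μ = 2 := exp_log two_pos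
  have hd : 0 ≤ 1 - μ - μ ^ 2 / 2 := by nlinarith [log_two_lt_d9]
  rcases le_or_gt x 0 with h0 | h0
  · rw [max_eq_right h0]
    rcases le_or_gt x (-1) with h | h
    · rw [clipL_of_le_neg_one h, mul_neg_one, exp_neg, hexp]
      nlinarith [sq_nonneg (μ * x + 1)]
    · rw [clipL_of_mem_Icc h.le (h0.trans zero_le_one)]
      have hquad := exp_le_one_add_add_sq_div_two_of_nonpos (mul_nonpos_of_nonneg_of_nonpos hμ.le h0)
      linarith
  · rw [max_eq_left h0.le]
    rcases le_or_gt x 1 with h' | h'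
    · rw [clipL_of_mem_Icc (by linarith) h']
      have htaylor : exp (μ * x) - (1 + μ * x + μ ^ 2 * x ^ 2 / 2) ≤
          x ^ 3 * (2 - (1 + μ + μ ^ 2 / 2)) := by
        simpa [sum_range_succ, hexp, mul_pow] using exp_mul_sub_sum_range_le (k := 3) hμ.le
          (fun n ↦ pow_le_pow_of_le_one h0.le h' (by omega))
      linarith
    · -- every term is increasing for `x ≥ 1`, and at `x = 1` they add up to `2`
      rw [clipL_of_one_le h'.le, mul_one, hexp]
      have h2 : 1 ≤ x ^ 2 := one_le_pow₀ h'.le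
      have h3 : 1 ≤ x ^ 3 := one_le_pow₀ h'.le
      nlinarith

theorem clipL_le_clipLplus {lam : ℝ} (hlam : 0 < lam)
    (hroot : -(1 / lam) * log (1 - lam ^ 2 / (4 * (exp lam - 1 - lam))) = 1) (x : ℝ) :
    clipL x ≤ clipLplus lam x :=
  le_one_div_mul_log_of_exp_mul_le hlam (exp_mul_clipL_le hlam hroot x)

theorem clipL_le_clipLplus' (x : ℝ) : clipL x ≤ clipLplus' x :=
  le_one_div_mul_log_of_exp_mul_le (log_pos one_lt_two) (exp_log_two_mul_clipL_le x)

theorem clip_bounds (lam : ℝ) (hlam : 0 < lam)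
    (hroot : -(1 / lam) * Real.log (1 - lam ^ 2 / (4 * (Real.exp lam - 1 - lam))) = 1)
    (x : ℝ) :
    (clipLminus lam x ≤ clipL x ∧ clipL x ≤ clipLplus lam x) ∧
    (clipLminus' x ≤ clipL x ∧ clipL x ≤ clipLplus' x) := by
  have lower := clipL_le_clipLplus hlam hroot (-x)
  have lower' := clipL_le_clipLplus' (-x)
  rw [clipL_neg] at lower lower'
  exact ⟨⟨neg_le.1 lower, clipL_le_clipLplus hlam hroot x⟩,
    ⟨neg_le.1 lower', clipL_le_clipLplus' x⟩⟩
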